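/- The second fundamental form |II| = |I²| of V at P is the apolar system to the system of quadrics associated to the Laplace equations of order 2 of V at P: a quadratic form q = ∑_{|I|=2} E_I v^I satisfies ∑_{|I|=2} E_I x̂^I(u₀) ∈ T^(1)(u₀) if and only if q is apolar to every element of |II|. Consequently, if V satisfies δ₂ independent Laplace equations of order 2 at P (i.e. dim_ℂ W₂ = δ₂), then dim_ℂ |II| = C(k+1, 2) − δ₂, i.e. |II| has projective dimension C(k+1,2) − 1 − δ₂. -/

import Mathlib

/- Common setup: iterated partial derivatives, multi-indices, osculating spaces,
fundamental forms for a local parametrisation `x : ℂ^k → ℂ^N` of a variety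
`V ⊂ ℙ^N`, lifted to `x̂ = (1, x) : ℂ^k → ℂ^{N+1}`. -/

open scoped BigOperators

noncomputable section

/-- Iterated partial derivative of `f` along a list of coordinate directions. -/
def pderivList {k : ℕ} {E : Type} [NormedAddCommGroup E] [NormedSpace ℂ E] :
    List (Fin k) → ((Fin k → ℂ) → E) → ((Fin k → ℂ) → E)
  | [], f => f
  | j :: L, f => fun u => fderiv ℂ (pderivList L f) u (Pi.single j 1)

/-- The canonical list of coordinate directions attached to a multi-index `I : Fin k → ℕ`
(the direction `j` repeated `I j` times). -/
def idxList {k : ℕ} (I : Fin k → ℕ) : List (Fin k) :=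
  (List.finRange k).flatMap fun j => List.replicate (I j) j

/-- The partial derivative `∂^I f = ∂^{|I|} f / ∂u₁^{i₁} ⋯ ∂u_k^{i_k}`. -/
def pd {k : ℕ} {E : Type} [NormedAddCommGroup E] [NormedSpace ℂ E]
    (I : Fin k → ℕ) (f : (Fin k → ℂ) → E) : (Fin k → ℂ) → E :=
  pderivList (idxList I) f

/-- The finset of multi-indices `I : Fin k → ℕ` of total degree `|I| ≤ r`. -/
def degLE (k r : ℕ) : Finset (Fin k → ℕ) :=
  (Finset.Iic fun _ : Fin k => r).filter fun I => (∑ j, I j) ≤ r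

/-- The finset of multi-indices `I : Fin k → ℕ` of total degree `|I| = r`. -/
def degEq (k r : ℕ) : Finset (Fin k → ℕ) :=
  (Finset.Iic fun _ : Fin k => r).filter fun I => (∑ j, I j) = r

/-- The lift `x̂(u) = (1, x(u))` of the parametrisation `x` to the affine cone `ℂ^{N+1}`. -/
def coneLift {k N : ℕ} (x : (Fin k → ℂ) → (Fin N → ℂ)) : (Fin k → ℂ) → (Fin (N + 1) → ℂ) :=
  fun u => Fin.cons 1 (x u)

/-- `osc x̂ s u` is the affine cone `T^(s)(u)` over the `s`-th osculating space at the point of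
parameter `u`: the span of all partial derivatives `x̂^I(u)` with `|I| ≤ s`. -/
def osc {k N : ℕ} (xhat : (Fin k → ℂ) → (Fin (N + 1) → ℂ)) (s : ℕ) (u : Fin k → ℂ) :
    Submodule ℂ (Fin (N + 1) → ℂ) :=
  Submodule.span ℂ {y | ∃ I : Fin k → ℕ, (∑ j, I j) ≤ s ∧ y = pd I xhat u}

/-- The degree-`r` form `F^r_ξ(v) = ξ(D^r x̂(u₀)(v,…,v))`, as a function of `v ∈ ℂ^k`. -/
def formOf {k N : ℕ} (xhat : (Fin k → ℂ) → (Fin (N + 1) → ℂ)) (u₀ : Fin k → ℂ) (r : ℕ)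
    (ξ : Module.Dual ℂ (Fin (N + 1) → ℂ)) : (Fin k → ℂ) → ℂ :=
  fun v => ξ (iteratedFDeriv ℂ r xhat u₀ fun _ => v)

/-- The `r`-th fundamental form `|I^r|` of `V` at `P`, as the set of the forms `F^r_ξ` for `ξ`
a linear functional vanishing on `T^(r-1)(u₀)`. -/
def fundSet {k N : ℕ} (xhat : (Fin k → ℂ) → (Fin (N + 1) → ℂ)) (u₀ : Fin k → ℂ) (r : ℕ) :
    Set ((Fin k → ℂ) → ℂ) :=
  { F | ∃ ξ : Module.Dual ℂ (Fin (N + 1) → ℂ),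
      (∀ y ∈ osc xhat (r - 1) u₀, ξ y = 0) ∧ F = formOf xhat u₀ r ξ }

/-- The `r`-th fundamental form `|I^r|` as a subspace of the space of functions of `v`. -/
def fundForm {k N : ℕ} (xhat : (Fin k → ℂ) → (Fin (N + 1) → ℂ)) (u₀ : Fin k → ℂ) (r : ℕ) :
    Submodule ℂ ((Fin k → ℂ) → ℂ) :=
  Submodule.span ℂ (fundSet xhat u₀ r)

/-- The linear map sending the coefficients `(E_I)_{|I|=t}` of a degree-`t` form to
`∑_{|I|=t} E_I x̂^I(u₀) ∈ ℂ^{N+1}`; a form is the symbol of a Laplace equation of order `t`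
iff its coefficients are mapped into `T^(t-1)(u₀)`. -/
def symbolMap {k N : ℕ} (xhat : (Fin k → ℂ) → (Fin (N + 1) → ℂ)) (u₀ : Fin k → ℂ) (t : ℕ) :
    ({I : Fin k → ℕ // I ∈ degEq k t} → ℂ) →ₗ[ℂ] (Fin (N + 1) → ℂ) where
  toFun E := ∑ I : {I : Fin k → ℕ // I ∈ degEq k t}, E I • pd I.1 xhat u₀
  map_add' a b := by simp [add_smul, Finset.sum_add_distrib]
  map_smul' c a := by simp [smul_smul, Finset.smul_sum]

/-- The parametrisation `Φ_t(u, λ) = ∑_{|I| ≤ t} λ_I x̂^I(u)` of the affine cone over the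
`t`-th osculating variety `Tan^t(V)`. -/
def tanPhi {k N : ℕ} (xhat : (Fin k → ℂ) → (Fin (N + 1) → ℂ)) (t : ℕ) :
    ((Fin k → ℂ) × ({I : Fin k → ℕ // I ∈ degLE k t} → ℂ)) → (Fin (N + 1) → ℂ) :=
  fun p => ∑ I : {I : Fin k → ℕ // I ∈ degLE k t}, p.2 I • pd I.1 xhat p.1

/-- The rank of the Jacobian matrix of a linear system `S` of degree-`r` forms:
the maximum over `v ∈ ℂ^k` of the dimension of the span of the gradients at `v`
of the members of `S`. -/
def jacRank (k : ℕ) (S : Set ((Fin k → ℂ) → ℂ)) : ℕ :=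
  sSup {r : ℕ | ∃ v : Fin k → ℂ,
    r = Module.finrank ℂ
      ↥(Submodule.span ℂ {g : Fin k → ℂ | ∃ F ∈ S, g = fun j => pd (Pi.single j 1) F v})}

/-- The coefficients of the reducible degree-`(t+1)` form
`(∑_j w_j v_j) · (∑_{|I| = t} λ_I v^I)`. -/
def prodSymb {k : ℕ} (t : ℕ) (w : Fin k → ℂ) (lam : {I : Fin k → ℕ // I ∈ degLE k t} → ℂ)
    (J : Fin k → ℕ) : ℂ :=
  ∑ j : Fin k,
    if h : 1 ≤ J j ∧ (J - Pi.single j 1 : Fin k → ℕ) ∈ degLE k t ∧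
        (∑ i, (J - Pi.single j 1 : Fin k → ℕ) i) = t
    then w j * lam ⟨(J - Pi.single j 1 : Fin k → ℕ), h.2.1⟩ else 0

/-! `F_ξ(v) = ξ(D²x̂(u₀)(v, v))` is a quadratic form, so by the symmetry of `D²x̂(u₀)` its second
partials are the constants `∂^I F_ξ = 2 ξ(x̂^I(u₀))` for `|I| = 2`. Hence
`∑ E_I ∂^I F_ξ = 2 ξ(∑ E_I x̂^I(u₀))`, and a vector lies in `T^(1)(u₀)` iff every `ξ` vanishing on
`T^(1)(u₀)` kills it: this is the apolarity. The same identity shows that `ξ ↦ F_ξ` has the same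
kernel as the transpose of the symbol map `E ↦ ∑ E_I x̂^I(u₀)`, so `|II|` is isomorphic to the
image of the annihilator of `T^(1)(u₀)` under that transpose, which is the annihilator of `W₂` in
the `C(k+1, 2)`-dimensional space of quadratic symbols. -/

section MultiIndex

variable {k : ℕ}

lemma count_idxList (I : Fin k → ℕ) (m : Fin k) : (idxList I).count m = I m := by
  simp only [idxList, List.count_flatMap, ← Fin.sum_univ_def, Function.comp_def,
    List.count_replicate, beq_iff_eq]
  simp [eq_comm]

lemma length_idxList (I : Fin k → ℕ) : (idxList I).length = ∑ j, I j := by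
  simp [idxList, List.length_flatMap, Fin.sum_univ_def]

lemma idxList_single_add_single_perm (a b : Fin k) :
    (idxList (Pi.single a 1 + Pi.single b 1)).Perm [a, b] := by
  classical
  refine List.perm_iff_count.2 fun m => ?_
  simp only [count_idxList, Pi.add_apply, Pi.single_apply, List.count_cons, List.count_nil,
    beq_iff_eq]
  split_ifs <;> omega

lemma exists_eq_single_add_single_of_sum_eq_two {I : Fin k → ℕ} (h : ∑ j, I j = 2) :
    ∃ a b : Fin k, I = Pi.single a 1 + Pi.single b 1 := by
  classical
  obtain ⟨a, b, hab⟩ := List.length_eq_two.1 ((length_idxList I).trans h)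
  refine ⟨a, b, funext fun m => ?_⟩
  rw [← count_idxList I m, hab]
  simp only [Pi.add_apply, Pi.single_apply, List.count_cons, List.count_nil, beq_iff_eq]
  split_ifs <;> omega

lemma mem_degEq {r : ℕ} {I : Fin k → ℕ} : I ∈ degEq k r ↔ ∑ j, I j = r := by
  refine ⟨fun h => (Finset.mem_filter.1 h).2, fun h => Finset.mem_filter.2 ⟨?_, h⟩⟩
  exact Finset.mem_Iic.2 fun j => h ▸ Finset.single_le_sum (fun _ _ => Nat.zero_le _)
    (Finset.mem_univ j)

lemma single_add_single_mem_degEq (a b : Fin k) : Pi.single a 1 + Pi.single b 1 ∈ degEq k 2 := by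
  classical
  simp [mem_degEq, Finset.sum_add_distrib]

lemma card_degEq (r : ℕ) : (degEq k r).card = (k + r - 1).choose r := by
  classical
  rw [← Fintype.card_coe, ← Fintype.card_congr ((Sym.equivNatSumOfFintype (Fin k) r).trans
    (Equiv.subtypeEquivRight fun _ => mem_degEq.symm)), Sym.card_sym_eq_choose, Fintype.card_fin]

end MultiIndex

section LinearAlgebra

variable {K V W : Type*} [Field K] [AddCommGroup V] [Module K V] [AddCommGroup W] [Module K W]

lemma Submodule.dualAnnihilator_map_dualMap_eq (f : V →ₗ[K] W) (T : Submodule K W) :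
    T.dualAnnihilator.map f.dualMap = (T.comap f).dualAnnihilator := by
  rw [← T.range_dualMap_mkQ_eq, ← LinearMap.range_comp, LinearMap.dualMap_comp_dualMap,
    LinearMap.range_dualMap_eq_dualAnnihilator_ker, LinearMap.ker_comp, Submodule.ker_mkQ]

lemma Submodule.finrank_map_eq_of_ker_eq {M₁ M₂ : Type*} [AddCommGroup M₁] [Module K M₁]
    [AddCommGroup M₂] [Module K M₂] [FiniteDimensional K V] {f : V →ₗ[K] M₁} {g : V →ₗ[K] M₂}
    (h : LinearMap.ker f = LinearMap.ker g) (p : Submodule K V) :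
    Module.finrank K (p.map f) = Module.finrank K (p.map g) := by
  have hf := LinearMap.finrank_range_add_finrank_ker (f.comp p.subtype)
  have hg := LinearMap.finrank_range_add_finrank_ker (g.comp p.subtype)
  rw [LinearMap.range_comp, Submodule.range_subtype, LinearMap.ker_comp, h] at hf
  rw [LinearMap.range_comp, Submodule.range_subtype, LinearMap.ker_comp] at hg
  omega

end LinearAlgebra

section PartialDerivatives

variable {k : ℕ} {E : Type} [NormedAddCommGroup E] [NormedSpace ℂ E]

lemma pderivList_zero (L : List (Fin k)) : pderivList L (0 : (Fin k → ℂ) → E) = 0 := by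
  induction L with
  | nil => rfl
  | cons j L ih => funext u; simp [pderivList, ih]

lemma pd_zero (I : Fin k → ℕ) : pd I (0 : (Fin k → ℂ) → E) = 0 :=
  pderivList_zero _

lemma pderivList_pair_eq_fderiv_fderiv {f : (Fin k → ℂ) → E} {u : Fin k → ℂ}
    (hf : DifferentiableAt ℂ (fderiv ℂ f) u) (a b : Fin k) :
    pderivList [a, b] f u = fderiv ℂ (fderiv ℂ f) u (Pi.single a 1) (Pi.single b 1) := by
  change fderiv ℂ (fun u' => fderiv ℂ f u' (Pi.single b 1)) u (Pi.single a 1) = _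
  rw [fderiv_clm_apply hf (differentiableAt_const _)]
  simp

lemma pderivList_pair_bilinear (B : (Fin k → ℂ) →L[ℂ] (Fin k → ℂ) →L[ℂ] E) (a b : Fin k) :
    pderivList [a, b] (fun v => B v v) =
      fun _ => B (Pi.single a 1) (Pi.single b 1) + B (Pi.single b 1) (Pi.single a 1) := by
  have hfst : pderivList [b] (fun v => B v v) =
      ⇑(B.flip (Pi.single b 1) + B (Pi.single b 1)) := by
    funext u
    change fderiv ℂ (fun v => B v v) u (Pi.single b 1) = _
    rw [fderiv_clm_apply (c := fun v => B v) (u := fun v => v) B.differentiableAt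
      differentiableAt_id]
    simp [add_comm]
  funext u
  change fderiv ℂ (pderivList [b] fun v => B v v) u (Pi.single a 1) = _
  rw [hfst, ContinuousLinearMap.fderiv]
  simp

lemma pd_single_add_single {f : (Fin k → ℂ) → E} {u : Fin k → ℂ} {a b : Fin k}
    (hsymm : pderivList [b, a] f u = pderivList [a, b] f u) :
    pd (Pi.single a 1 + Pi.single b 1) f u = pderivList [a, b] f u := by
  rcases List.perm_pair.1 (idxList_single_add_single_perm a b) with h | h <;> simp [pd, h, hsymm]

lemma pd_single_add_single_eq_fderiv_fderiv {f : (Fin k → ℂ) → E} {u : Fin k → ℂ}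
    (hf : ContDiffAt ℂ 2 f u) (a b : Fin k) :
    pd (Pi.single a 1 + Pi.single b 1) f u =
      fderiv ℂ (fderiv ℂ f) u (Pi.single a 1) (Pi.single b 1) := by
  have hdf : DifferentiableAt ℂ (fderiv ℂ f) u :=
    (hf.fderiv_right (m := 1) le_rfl).differentiableAt one_ne_zero
  have hsymm : pderivList [b, a] f u = pderivList [a, b] f u := by
    rw [pderivList_pair_eq_fderiv_fderiv hdf, pderivList_pair_eq_fderiv_fderiv hdf]
    exact hf.isSymmSndFDerivAt (by simp) _ _
  rw [pd_single_add_single hsymm, pderivList_pair_eq_fderiv_fderiv hdf]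

end PartialDerivatives

lemma ContDiffAt.coneLift {k N : ℕ} {n : WithTop ℕ∞} {x : (Fin k → ℂ) → (Fin N → ℂ)}
    {u : Fin k → ℂ} (hx : ContDiffAt ℂ n x u) : ContDiffAt ℂ n (coneLift x) u :=
  contDiffAt_pi.2 <| Fin.cases (by simpa [_root_.coneLift] using contDiffAt_const)
    fun i => by simpa [_root_.coneLift] using contDiffAt_pi.1 hx i

section FundamentalForm

variable {k N : ℕ} (xhat : (Fin k → ℂ) → (Fin (N + 1) → ℂ)) (u₀ : Fin k → ℂ)

def formOfLinearMap (r : ℕ) : Module.Dual ℂ (Fin (N + 1) → ℂ) →ₗ[ℂ] ((Fin k → ℂ) → ℂ) where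
  toFun := formOf xhat u₀ r
  map_add' ξ η := by funext v; simp [formOf]
  map_smul' c ξ := by funext v; simp [formOf]

lemma fundForm_eq_map (r : ℕ) :
    fundForm xhat u₀ r = (osc xhat (r - 1) u₀).dualAnnihilator.map (formOfLinearMap xhat u₀ r) := by
  rw [fundForm, ← Submodule.span_eq (Submodule.map _ _)]
  congr 1
  ext F
  simp [fundSet, Submodule.mem_dualAnnihilator, formOfLinearMap, eq_comm]

lemma symbolMap_dualMap_eq_zero_iff (t : ℕ) (ξ : Module.Dual ℂ (Fin (N + 1) → ℂ)) :
    (symbolMap xhat u₀ t).dualMap ξ = 0 ↔ ∀ I ∈ degEq k t, ξ (pd I xhat u₀) = 0 := by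
  classical
  constructor
  · intro h I hI
    simpa [symbolMap, Pi.single_apply] using LinearMap.congr_fun h (Pi.single ⟨I, hI⟩ 1)
  · intro h
    ext E
    simp [symbolMap, h _ (Subtype.prop _)]

lemma exists_bilinear_formOf_two_eq (ξ : Module.Dual ℂ (Fin (N + 1) → ℂ)) :
    ∃ B : (Fin k → ℂ) →L[ℂ] (Fin k → ℂ) →L[ℂ] ℂ,
      (∀ v w, B v w = ξ (fderiv ℂ (fderiv ℂ xhat) u₀ v w)) ∧ formOf xhat u₀ 2 ξ = fun v => B v v :=
  ⟨(ContinuousLinearMap.compL ℂ _ _ ℂ (LinearMap.toContinuousLinearMap ξ)).comp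
    (fderiv ℂ (fderiv ℂ xhat) u₀), fun _ _ => rfl,
    funext fun v => by simp [formOf, iteratedFDeriv_two_apply]⟩

variable {xhat u₀}

lemma pd_formOf_two (hxhat : ContDiffAt ℂ 2 xhat u₀) (ξ : Module.Dual ℂ (Fin (N + 1) → ℂ))
    {I : Fin k → ℕ} (hI : I ∈ degEq k 2) :
    pd I (formOf xhat u₀ 2 ξ) = fun _ => 2 * ξ (pd I xhat u₀) := by
  obtain ⟨a, b, rfl⟩ := exists_eq_single_add_single_of_sum_eq_two (mem_degEq.1 hI)
  obtain ⟨B, hB, hform⟩ := exists_bilinear_formOf_two_eq xhat u₀ ξ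
  have hsymm := hxhat.isSymmSndFDerivAt (by simp)
  funext u
  have hquad : pderivList [b, a] (fun v => B v v) u = pderivList [a, b] (fun v => B v v) u := by
    rw [pderivList_pair_bilinear, pderivList_pair_bilinear, add_comm]
  rw [pd_single_add_single_eq_fderiv_fderiv hxhat, hform, pd_single_add_single hquad,
    pderivList_pair_bilinear, hB, hB, hsymm (Pi.single b 1)]
  ring

lemma formOf_two_eq_zero_iff (hxhat : ContDiffAt ℂ 2 xhat u₀)
    (ξ : Module.Dual ℂ (Fin (N + 1) → ℂ)) :
    formOf xhat u₀ 2 ξ = 0 ↔ ∀ I ∈ degEq k 2, ξ (pd I xhat u₀) = 0 := by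
  constructor
  · intro h I hI
    have h2 := congr_fun (pd_formOf_two hxhat ξ hI) 0
    rw [h, pd_zero] at h2
    simpa using h2.symm
  · intro h
    obtain ⟨B, hB, hform⟩ := exists_bilinear_formOf_two_eq xhat u₀ ξ
    have hB0 : B = 0 := by
      refine ContinuousLinearMap.coe_injective ((Pi.basisFun ℂ (Fin k)).ext fun a => ?_)
      refine ContinuousLinearMap.coe_injective ((Pi.basisFun ℂ (Fin k)).ext fun b => ?_)
      simpa [hB, ← pd_single_add_single_eq_fderiv_fderiv hxhat] using
        h _ (single_add_single_mem_degEq a b)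
    rw [hform, hB0]
    rfl

lemma sum_smul_pd_formOf_two (hxhat : ContDiffAt ℂ 2 xhat u₀) (E : (Fin k → ℕ) → ℂ)
    (ξ : Module.Dual ℂ (Fin (N + 1) → ℂ)) :
    ∑ I ∈ degEq k 2, E I • pd I (formOf xhat u₀ 2 ξ) =
      fun _ => 2 * ξ (∑ I ∈ degEq k 2, E I • pd I xhat u₀) := by
  funext v
  simp only [Finset.sum_apply, map_sum, Finset.mul_sum, map_smul, Pi.smul_apply, smul_eq_mul]
  refine Finset.sum_congr rfl fun I hI => ?_
  rw [pd_formOf_two hxhat ξ hI]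
  ring

theorem sum_smul_pd_mem_osc_one_iff (hxhat : ContDiffAt ℂ 2 xhat u₀) (E : (Fin k → ℕ) → ℂ) :
    ∑ I ∈ degEq k 2, E I • pd I xhat u₀ ∈ osc xhat 1 u₀ ↔
      ∀ F ∈ fundSet xhat u₀ 2, ∑ I ∈ degEq k 2, E I • pd I F = 0 := by
  rw [← Subspace.forall_mem_dualAnnihilator_apply_eq_zero_iff]
  constructor
  · rintro h F ⟨ξ, hξ, rfl⟩
    rw [sum_smul_pd_formOf_two hxhat, h ξ ((Submodule.mem_dualAnnihilator _).2 hξ), mul_zero]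
    rfl
  · intro h ξ hξ
    have h0 := congr_fun (h _ ⟨ξ, (Submodule.mem_dualAnnihilator _).1 hξ, rfl⟩) 0
    rw [sum_smul_pd_formOf_two hxhat] at h0
    simpa using h0

theorem finrank_fundForm_two (hxhat : ContDiffAt ℂ 2 xhat u₀) :
    Module.finrank ℂ (fundForm xhat u₀ 2) =
      (k + 1).choose 2 - Module.finrank ℂ ((osc xhat 1 u₀).comap (symbolMap xhat u₀ 2)) := by
  have hker : LinearMap.ker (formOfLinearMap xhat u₀ 2) =
      LinearMap.ker (symbolMap xhat u₀ 2).dualMap := by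
    ext ξ
    exact (formOf_two_eq_zero_iff hxhat ξ).trans (symbolMap_dualMap_eq_zero_iff xhat u₀ 2 ξ).symm
  have hdim : Module.finrank ℂ ({I // I ∈ degEq k 2} → ℂ) = (k + 1).choose 2 := by
    simp [card_degEq]
  rw [fundForm_eq_map, show 2 - 1 = 1 from rfl, Submodule.finrank_map_eq_of_ker_eq hker,
    Submodule.dualAnnihilator_map_dualMap_eq, ← hdim,
    ← Subspace.finrank_add_finrank_dualAnnihilator_eq
      ((osc xhat 1 u₀).comap (symbolMap xhat u₀ 2))]
  omega

end FundamentalForm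

theorem second_fundamental_form_apolar_and_dimension_general (k N : ℕ)
    (U : Set (Fin k → ℂ)) (hU : IsOpen U) (u₀ : Fin k → ℂ) (hu₀ : u₀ ∈ U)
    (x : (Fin k → ℂ) → (Fin N → ℂ)) (hx : ContDiffOn ℂ (⊤ : ℕ∞) x U) :
    (∀ E : (Fin k → ℕ) → ℂ,
        (∑ I ∈ degEq k 2, E I • pd I (coneLift x) u₀) ∈ osc (coneLift x) 1 u₀ ↔
          ∀ F ∈ fundSet (coneLift x) u₀ 2,
            (∑ I ∈ degEq k 2, E I • pd I F) = 0) ∧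
      Module.finrank ℂ ↥(fundForm (coneLift x) u₀ 2) =
        Nat.choose (k + 1) 2 -
          Module.finrank ℂ ↥(Submodule.comap (symbolMap (coneLift x) u₀ 2)
            (osc (coneLift x) 1 u₀)) := by
  have hxhat : ContDiffAt ℂ 2 (coneLift x) u₀ :=
    (hx.contDiffAt (hU.mem_nhds hu₀)).coneLift.of_le (WithTop.coe_le_coe.2 le_top)
  exact ⟨sum_smul_pd_mem_osc_one_iff hxhat, finrank_fundForm_two hxhat⟩

/-- The second fundamental form `|II| = |I²|` is the apolar system to the quadrics associated
to the Laplace equations of order 2; consequently `dim_ℂ |II| = C(k+1, 2) - δ₂`. -/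
theorem second_fundamental_form_apolar_and_dimension (k N t : ℕ) (hk : 1 ≤ k) (hN : 1 ≤ N) (ht : 1 ≤ t)
    (U : Set (Fin k → ℂ)) (hU : IsOpen U) (u₀ : Fin k → ℂ) (hu₀ : u₀ ∈ U)
    (x : (Fin k → ℂ) → (Fin N → ℂ)) (hx : ContDiffOn ℂ (⊤ : ℕ∞) x U) :
    (∀ E : (Fin k → ℕ) → ℂ,
        (∑ I ∈ degEq k 2, E I • pd I (coneLift x) u₀) ∈ osc (coneLift x) 1 u₀ ↔
          ∀ F ∈ fundSet (coneLift x) u₀ 2,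
            (∑ I ∈ degEq k 2, E I • pd I F) = 0) ∧
      Module.finrank ℂ ↥(fundForm (coneLift x) u₀ 2) =
        Nat.choose (k + 1) 2 -
          Module.finrank ℂ ↥(Submodule.comap (symbolMap (coneLift x) u₀ 2)
            (osc (coneLift x) 1 u₀)) :=
  second_fundamental_form_apolar_and_dimension_general k N U hU u₀ hu₀ x hx

end
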